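/- Let X ⊆ H be a vector subspace with its own norm satisfying ‖·‖_H ≤ ‖·‖_X. If for some r > 0 and A > 0 every f ∈ X satisfies ∫_{(−r,r]} x^{−2} dσ_{f−f*}(x) ≤ A ‖f‖²_X, then ‖P_{t,s} − P‖²_{X→H} ≤ 4(A + 1/r²)(t−s)^{−2} for all t > s. -/

import Mathlib

open MeasureTheory Real Set intervalIntegral

/-- The Fejér-type kernel `F_τ(x) = (sin(τx/2)/(τx/2))²`. -/
noncomputable def Fker (τ x : ℝ) : ℝ := (Real.sin (τ * x / 2) / (τ * x / 2)) ^ 2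

/-- `ρ(α) = inf_{x>0} x^{2-α}/sin²x` (points with `sin x = 0` excluded). -/
noncomputable def rho (α : ℝ) : ℝ :=
  sInf {r : ℝ | ∃ x > 0, Real.sin x ≠ 0 ∧ r = x ^ (2 - α) / Real.sin x ^ 2}

/-! By the spectral representation, `‖P_{t,s} f - P f‖² = ∫ F_{t-s} dσ_{f-f*}`, and
`F_τ(x) ≤ 4 / (τ x)²`. On `(-r, r]` this is integrated against `x⁻²` using the hypothesis;
off it, `F_τ ≤ 4 / (τ r)²` and it remains to bound the mass of `σ_{f-f*}` off the origin by
`‖f‖²`. For that, let `τ → 0⁺`: `F_τ` tends boundedly to the indicator of `{0}ᶜ`, while every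
average `P_{t,s} f - P f` is an average of `U^τ (f - Pf)`, hence of norm at most
`‖f - Pf‖ ≤ ‖f‖`. -/

open Filter Topology

section Hilbert

variable {E : Type*} [NormedAddCommGroup E] [InnerProductSpace ℂ E]

theorem norm_sub_le_of_inner_sub_eq_zero {f p : E} (h : inner ℂ (f - p) p = 0) :
    ‖f - p‖ ≤ ‖f‖ := by
  have hpyth := norm_add_sq_eq_norm_sq_add_norm_sq_of_inner_eq_zero (f - p) p h
  rw [sub_add_cancel] at hpyth
  refine (mul_self_le_mul_self_iff (norm_nonneg _) (norm_nonneg _)).2 ?_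
  rw [hpyth]
  exact le_add_of_nonneg_right (mul_self_nonneg _)

theorem norm_inv_sub_smul_integral_le {g : ℝ → E} {C : ℝ} (hg : ∀ τ, ‖g τ‖ ≤ C) (s t : ℝ) :
    ‖(t - s)⁻¹ • ∫ τ in s..t, g τ‖ ≤ C := by
  rcases eq_or_ne (t - s) 0 with hts | hts
  · simpa [hts] using (norm_nonneg (g 0)).trans (hg 0)
  rw [norm_smul, norm_inv, Real.norm_eq_abs]
  calc |t - s|⁻¹ * ‖∫ τ in s..t, g τ‖ ≤ |t - s|⁻¹ * (C * |t - s|) := by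
        gcongr
        exact norm_integral_le_of_norm_le_const fun τ _ => hg τ
    _ = C := by field_simp

theorem norm_average_sub_le [CompleteSpace E] {U : ℝ → E →L[ℂ] E} (hU : ∀ τ g, ‖U τ g‖ ≤ ‖g‖)
    {f p : E} (hf : Continuous fun τ => U τ f) (hp : ∀ τ, U τ p = p)
    (horth : inner ℂ (f - p) p = 0) {s t : ℝ} (hst : s < t) :
    ‖(t - s)⁻¹ • (∫ τ in s..t, U τ f) - p‖ ≤ ‖f‖ := by
  have hmean : (t - s)⁻¹ • (∫ τ in s..t, U τ f) - p = (t - s)⁻¹ • ∫ τ in s..t, U τ (f - p) := by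
    simp only [map_sub, hp]
    rw [integral_sub (hf.intervalIntegrable _ _) intervalIntegrable_const,
      intervalIntegral.integral_const, smul_sub, smul_smul,
      inv_mul_cancel₀ (sub_ne_zero.2 hst.ne'), one_smul]
  rw [hmean]
  exact (norm_inv_sub_smul_integral_le (fun τ => hU τ _) s t).trans
    (norm_sub_le_of_inner_sub_eq_zero horth)

end Hilbert

theorem Fker_nonneg (τ x : ℝ) : 0 ≤ Fker τ x := sq_nonneg _

theorem Fker_le_one (τ x : ℝ) : Fker τ x ≤ 1 := by
  rw [Fker, div_pow]
  exact div_le_one_of_le₀ sin_sq_le_sq (sq_nonneg _)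

theorem measurable_Fker (τ : ℝ) : Measurable (Fker τ) := by
  unfold Fker
  fun_prop

theorem Fker_le_div_sq (τ x : ℝ) : Fker τ x ≤ 4 / (τ * x) ^ 2 := by
  calc Fker τ x = sin (τ * x / 2) ^ 2 / (τ * x / 2) ^ 2 := div_pow _ _ _
    _ ≤ 1 / (τ * x / 2) ^ 2 := by gcongr; exact sin_sq_le_one _
    _ = 4 / (τ * x) ^ 2 := by ring

theorem Fker_le_div_sq_of_notMem_Ioc {r x : ℝ} (hr : 0 < r) (hx : x ∉ Ioc (-r) r) (τ : ℝ) :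
    Fker τ x ≤ 4 / τ ^ 2 * (1 / r ^ 2) := by
  have hrx : r ^ 2 ≤ x ^ 2 := by
    rw [mem_Ioc, not_and_or, not_lt, not_le] at hx
    rcases hx with hx | hx <;> nlinarith
  calc Fker τ x ≤ 4 / τ ^ 2 * (1 / x ^ 2) := (Fker_le_div_sq τ x).trans_eq (by ring)
    _ ≤ 4 / τ ^ 2 * (1 / r ^ 2) := by gcongr

theorem tendsto_Fker_nhdsNE_zero (x : ℝ) :
    Tendsto (fun τ => Fker τ x) (𝓝[≠] 0) (𝓝 (({0}ᶜ : Set ℝ).indicator 1 x)) := by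
  rcases eq_or_ne x 0 with rfl | hx
  · simp [Fker]
  -- away from `τ = 0` the kernel is `sinc (τ x / 2) ^ 2`, which is continuous in `τ`
  have hsinc : Tendsto (fun τ => sinc (τ * x / 2) ^ 2) (𝓝[≠] 0) (𝓝 1) := by
    have h : Tendsto (fun τ => sinc (τ * x / 2) ^ 2) (𝓝 0) (𝓝 (sinc (0 * x / 2) ^ 2)) :=
      ((continuous_sinc.comp (by fun_prop)).pow 2).tendsto 0
    simpa using h.mono_left nhdsWithin_le_nhds
  rw [indicator_of_mem (by simpa using hx)]
  refine hsinc.congr' (eventually_nhdsWithin_of_forall fun τ (hτ : τ ≠ 0) => ?_)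
  dsimp only
  rw [Fker, sinc_of_ne_zero (by positivity)]

theorem measure_compl_zero_le_of_integral_Fker_le {μ : Measure ℝ} [IsFiniteMeasure μ] {C : ℝ}
    (h : ∀ τ > 0, ∫ x, Fker τ x ∂μ ≤ C) : μ {0}ᶜ ≤ ENNReal.ofReal C := by
  have hlim : Tendsto (fun τ => ∫ x, Fker τ x ∂μ) (𝓝[>] 0)
      (𝓝 (∫ x, ({0}ᶜ : Set ℝ).indicator 1 x ∂μ)) := by
    refine tendsto_integral_filter_of_dominated_convergence (fun _ => 1)
      (Eventually.of_forall fun τ => (measurable_Fker τ).aestronglyMeasurable)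
      (Eventually.of_forall fun τ => ae_of_all _ fun x => ?_) (integrable_const 1)
      (ae_of_all _ fun x => (tendsto_Fker_nhdsNE_zero x).mono_left
        (nhdsWithin_mono _ fun τ (hτ : 0 < τ) => hτ.ne'))
    rw [Real.norm_of_nonneg (Fker_nonneg τ x)]
    exact Fker_le_one τ x
  rw [integral_indicator_one (measurableSet_singleton 0).compl] at hlim
  have hreal : μ.real {0}ᶜ ≤ C := le_of_tendsto hlim (eventually_mem_nhdsWithin.mono h)
  exact (ENNReal.ofReal_toReal (measure_ne_top μ _)).symm.trans_le (ENNReal.ofReal_le_ofReal hreal)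

theorem integral_Fker_le {μ : Measure ℝ} {r a b : ℝ} (hr : 0 < r) (ha : 0 ≤ a) (hb : 0 ≤ b)
    (hnear : ∫⁻ x in Ioc (-r) r, ENNReal.ofReal (x ^ (-2 : ℝ)) ∂μ ≤ ENNReal.ofReal a)
    (hfar : μ (Ioc (-r) r)ᶜ ≤ ENNReal.ofReal b) (τ : ℝ) :
    ∫ x, Fker τ x ∂μ ≤ 4 / τ ^ 2 * (a + b / r ^ 2) := by
  rw [integral_eq_lintegral_of_nonneg_ae (ae_of_all _ (Fker_nonneg τ))
    (measurable_Fker τ).aestronglyMeasurable]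
  refine ENNReal.toReal_le_of_le_ofReal (by positivity) ?_
  set S := Ioc (-r) r
  have hnear_pt : ∀ x, ENNReal.ofReal (Fker τ x) ≤
      ENNReal.ofReal (4 / τ ^ 2) * ENNReal.ofReal (x ^ (-2 : ℝ)) := fun x => by
    rw [← ENNReal.ofReal_mul (by positivity), rpow_neg_ofNat, zpow_neg, zpow_ofNat]
    exact ENNReal.ofReal_le_ofReal ((Fker_le_div_sq τ x).trans_eq (by ring))
  calc ∫⁻ x, ENNReal.ofReal (Fker τ x) ∂μ
      = (∫⁻ x in S, ENNReal.ofReal (Fker τ x) ∂μ) + ∫⁻ x in Sᶜ, ENNReal.ofReal (Fker τ x) ∂μ :=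
        (lintegral_add_compl _ measurableSet_Ioc).symm
    _ ≤ (∫⁻ x in S, ENNReal.ofReal (4 / τ ^ 2) * ENNReal.ofReal (x ^ (-2 : ℝ)) ∂μ) +
          ∫⁻ _ in Sᶜ, ENNReal.ofReal (4 / τ ^ 2 * (1 / r ^ 2)) ∂μ :=
        add_le_add (lintegral_mono hnear_pt) (setLIntegral_mono' measurableSet_Ioc.compl
          fun x hx => ENNReal.ofReal_le_ofReal (Fker_le_div_sq_of_notMem_Ioc hr hx τ))
    _ = ENNReal.ofReal (4 / τ ^ 2) * (∫⁻ x in S, ENNReal.ofReal (x ^ (-2 : ℝ)) ∂μ) +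
          ENNReal.ofReal (4 / τ ^ 2 * (1 / r ^ 2)) * μ Sᶜ := by
        rw [lintegral_const_mul' _ _ ENNReal.ofReal_ne_top, setLIntegral_const]
    _ ≤ ENNReal.ofReal (4 / τ ^ 2) * ENNReal.ofReal a +
          ENNReal.ofReal (4 / τ ^ 2 * (1 / r ^ 2)) * ENNReal.ofReal b := by
        gcongr
    _ = ENNReal.ofReal (4 / τ ^ 2 * (a + b / r ^ 2)) := by
        rw [← ENNReal.ofReal_mul (by positivity), ← ENNReal.ofReal_mul (by positivity),
          ← ENNReal.ofReal_add (by positivity) (by positivity)]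
        ring_nf

theorem stmt19_general
    {H : Type*} [NormedAddCommGroup H] [InnerProductSpace ℂ H] [CompleteSpace H]
    (U : ℝ → H →L[ℂ] H)
    (hUiso : ∀ (τ : ℝ) (g : H), ‖U τ g‖ = ‖g‖)
    (hcont : ∀ f : H, Continuous fun τ : ℝ => U τ f)
    -- `P` is the orthogonal projection onto the fixed vectors of the group
    (P : H →L[ℂ] H)
    (hfix : ∀ (τ : ℝ) (f : H), U τ (P f) = P f)
    (horth : ∀ f g : H, (∀ τ : ℝ, U τ g = g) → (inner ℂ (f - P f) g : ℂ) = 0)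
    -- `μ f` is the spectral measure `σ_{f - Pf}`, finite with no atom at `0`
    (μ : H → Measure ℝ) (hfin : ∀ f : H, IsFiniteMeasure (μ f))
    (hrep : ∀ (f : H) (s t : ℝ), s < t →
      ‖(t - s)⁻¹ • (∫ τ in s..t, U τ f) - P f‖ ^ 2 = ∫ x, Fker (t - s) x ∂(μ f))
    -- `X` is a vector subspace of `H` with its own norm `nX`
    (X : Submodule ℂ H) (nX : H → ℝ)
    --  is continuously embedded: 
    (hemb : ∀ f ∈ X, ‖f‖ ≤ nX f)
    (r A : ℝ) (hr : 0 < r) (hA : 0 < A)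
    (hint : ∀ f ∈ X,
      ∫⁻ x in Set.Ioc (-r) r, ENNReal.ofReal (x ^ (-2 : ℝ)) ∂(μ f) ≤
        ENNReal.ofReal (A * nX f ^ 2)) :
    ∀ s t : ℝ, s < t → ∀ f ∈ X,
      ‖(t - s)⁻¹ • (∫ τ in s..t, U τ f) - P f‖ ^ 2 ≤
        4 * (A + 1 / r ^ 2) * (t - s) ^ (-2 : ℝ) * nX f ^ 2 := by
  intro s t hst f hf
  have hmass : μ f {0}ᶜ ≤ ENNReal.ofReal (nX f ^ 2) := by
    have := hfin f
    refine measure_compl_zero_le_of_integral_Fker_le fun τ hτ => ?_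
    have hrepτ := hrep f 0 τ hτ
    rw [sub_zero] at hrepτ
    rw [← hrepτ]
    have havg := norm_average_sub_le (fun τ g => (hUiso τ g).le) (hcont f) (hfix · f)
      (horth f (P f) (hfix · f)) hτ
    rw [sub_zero] at havg
    gcongr
    exact havg.trans (hemb f hf)
  have hzero : (0 : ℝ) ∈ Ioc (-r) r := ⟨neg_lt_zero.2 hr, hr.le⟩
  have hfar : μ f (Ioc (-r) r)ᶜ ≤ ENNReal.ofReal (nX f ^ 2) :=
    (measure_mono (compl_subset_compl.2 (singleton_subset_iff.2 hzero))).trans hmass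
  rw [hrep f s t hst, rpow_neg_ofNat, zpow_neg, zpow_ofNat]
  calc ∫ x, Fker (t - s) x ∂μ f ≤ 4 / (t - s) ^ 2 * (A * nX f ^ 2 + nX f ^ 2 / r ^ 2) :=
        integral_Fker_le hr (by positivity) (sq_nonneg _) (hint f hf) hfar _
    _ = 4 * (A + 1 / r ^ 2) * ((t - s) ^ 2)⁻¹ * nX f ^ 2 := by ring

theorem stmt19
    {H : Type*} [NormedAddCommGroup H] [InnerProductSpace ℂ H] [CompleteSpace H]
    (U : ℝ → H →L[ℂ] H)
    (hUgrp : ∀ a b : ℝ, U (a + b) = (U a).comp (U b))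
    (hUiso : ∀ (τ : ℝ) (g : H), ‖U τ g‖ = ‖g‖)
    (hcont : ∀ f : H, Continuous fun τ : ℝ => U τ f)
    -- `P` is the orthogonal projection onto the fixed vectors of the group
    (P : H →L[ℂ] H)
    (hfix : ∀ (τ : ℝ) (f : H), U τ (P f) = P f)
    (horth : ∀ f g : H, (∀ τ : ℝ, U τ g = g) → (inner ℂ (f - P f) g : ℂ) = 0)
    -- `μ f` is the spectral measure `σ_{f - Pf}`, finite with no atom at `0`
    (μ : H → Measure ℝ) (hfin : ∀ f : H, IsFiniteMeasure (μ f))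
    (hμ0 : ∀ f : H, μ f {0} = 0)
    (hrep : ∀ (f : H) (s t : ℝ), s < t →
      ‖(t - s)⁻¹ • (∫ τ in s..t, U τ f) - P f‖ ^ 2 = ∫ x, Fker (t - s) x ∂(μ f))
    -- `X` is a vector subspace of `H` with its own norm `nX`
    (X : Submodule ℂ H) (nX : H → ℝ)
    (hnX : ∀ f ∈ X, 0 ≤ nX f)
    --  is continuously embedded: 
    (hemb : ∀ f ∈ X, ‖f‖ ≤ nX f)
    (r A : ℝ) (hr : 0 < r) (hA : 0 < A)
    (hint : ∀ f ∈ X,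
      ∫⁻ x in Set.Ioc (-r) r, ENNReal.ofReal (x ^ (-2 : ℝ)) ∂(μ f) ≤
        ENNReal.ofReal (A * nX f ^ 2)) :
    ∀ s t : ℝ, s < t → ∀ f ∈ X,
      ‖(t - s)⁻¹ • (∫ τ in s..t, U τ f) - P f‖ ^ 2 ≤
        4 * (A + 1 / r ^ 2) * (t - s) ^ (-2 : ℝ) * nX f ^ 2 :=
  stmt19_general U hUiso hcont P hfix horth μ hfin hrep X nX hemb r A hr hA hint
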